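/- arXiv:1702.06633 — 4 statements merged into one kernel-verified Lean document; each statement's English description precedes it below -/
import Mathlib

section
/- Let p, λ', τ, T > 0 and define E[n_s] = e^{-λ'τ}(1-p)[1-e^{-λ'T}(1-p)]/T. If the count variables n[k] (k = 0,…,1/T − 1) are Bernoulli with this mean·T as success probability, satisfy n[k]n[l] = 0 for |k-l| = 1, and are independent for |k-l| ≥ 2, then D[n_s] = E[n_s] + (2T² - 3T)E[n_s]². -/
open MeasureTheory ProbabilityTheory Finset

/-!
With `S = ∑ k, n k` and `r = E[n k]`, expanding the square gives
`E[S²] = ∑ₖ ∑ₗ E[n k * n l]`, where the summand is `r` on the diagonal, `0` on the `2 (N - 1)`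
neighbouring pairs and `r²` on the remaining `(N - 1) (N - 2)` pairs. Hence
`Var S = N r - (3 N - 2) r²`, which is the claim since `E[S] = N r` and `T = 1 / N`.
-/

theorem card_adjacent_pairs_range (N : ℕ) :
    #{p ∈ range N ×ˢ range N | |(p.1 : ℤ) - p.2| = 1} = 2 * (N - 1) := by
  have hsplit : {p ∈ range N ×ˢ range N | |(p.1 : ℤ) - p.2| = 1}
      = (range (N - 1)).image (fun i => (i, i + 1))
        ∪ (range (N - 1)).image (fun i => (i + 1, i)) := by
    ext ⟨a, b⟩
    simp only [mem_filter, mem_product, mem_range, mem_union, mem_image, Prod.mk.injEq,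
      abs_eq (zero_le_one' ℤ)]
    constructor
    · rintro ⟨⟨ha, hb⟩, h | h⟩
      · exact .inr ⟨b, by omega, by omega, rfl⟩
      · exact .inl ⟨a, by omega, rfl, by omega⟩
    · rintro (⟨i, hi, rfl, rfl⟩ | ⟨i, hi, rfl, rfl⟩) <;> omega
  rw [hsplit, card_union_of_disjoint, card_image_of_injective, card_image_of_injective, card_range,
    two_mul]
  · intro i j h; simpa using h
  · intro i j h; simpa using h
  · simp only [disjoint_left, mem_image]
    rintro _ ⟨i, -, rfl⟩ ⟨j, -, h⟩
    simp only [Prod.mk.injEq] at h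
    omega

theorem card_adjacent_pairs (N : ℕ) :
    #{p : Fin N × Fin N | |(p.1 : ℤ) - p.2| = 1} = 2 * (N - 1) := by
  rw [← card_adjacent_pairs_range]
  refine card_bij (fun p _ => (p.1.val, p.2.val)) ?_ ?_ ?_
  · intro p hp
    simpa only [mem_filter, mem_univ, true_and, mem_product, mem_range, Fin.is_lt, and_self]
      using hp
  · intro p _ q _ h
    simpa only [Prod.ext_iff, Fin.ext_iff] using h
  · intro p hp
    simp only [mem_filter, mem_product, mem_range] at hp
    exact ⟨(⟨p.1, hp.1.1⟩, ⟨p.2, hp.1.2⟩), by simpa using hp.2, rfl⟩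

theorem sum_ite_diagonal_adjacent {N : ℕ} (hN : 0 < N) (a b c : ℝ) :
    ∑ k : Fin N, ∑ l : Fin N, (if k = l then a else if |(k : ℤ) - l| = 1 then b else c)
      = N * a + 2 * (N - 1) * b + (N - 1) * (N - 2) * c := by
  have hsplit : ∀ k l : Fin N, (if k = l then a else if |(k : ℤ) - l| = 1 then b else c)
      = c + (if k = l then a - c else 0) + (if |(k : ℤ) - l| = 1 then 1 else 0) * (b - c) := by
    intro k l
    by_cases hkl : k = l
    · simp [hkl]
    · split_ifs <;> ring
  have hadj : ∑ k : Fin N, ∑ l : Fin N, (if |(k : ℤ) - l| = 1 then (1 : ℝ) else 0)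
      = 2 * (N - 1) := by
    rw [← Fintype.sum_prod_type' (fun k l : Fin N => if |(k : ℤ) - l| = 1 then (1 : ℝ) else 0),
      sum_boole, card_adjacent_pairs]
    push_cast [Nat.one_le_iff_ne_zero.mpr hN.ne']
    ring
  simp only [hsplit, sum_add_distrib, ← sum_mul, sum_const, card_univ, Fintype.card_fin,
    sum_ite_eq, mem_univ, if_true, nsmul_eq_mul]
  rw [hadj]
  ring

section ZeroOne

variable {Ω : Type*} [MeasurableSpace Ω] {μ : Measure Ω} {X Y : Ω → ℝ}

theorem integrable_of_ae_zero_or_one [IsFiniteMeasure μ] (hX : AEStronglyMeasurable X μ)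
    (h01 : ∀ᵐ ω ∂μ, X ω = 0 ∨ X ω = 1) : Integrable X μ := by
  refine (integrable_const 1).mono' hX ?_
  filter_upwards [h01] with ω h
  rcases h with h | h <;> simp [h]

theorem ae_mul_zero_or_one (hX : ∀ᵐ ω ∂μ, X ω = 0 ∨ X ω = 1) (hY : ∀ᵐ ω ∂μ, Y ω = 0 ∨ Y ω = 1) :
    ∀ᵐ ω ∂μ, X ω * Y ω = 0 ∨ X ω * Y ω = 1 := by
  filter_upwards [hX, hY] with ω hx hy
  rcases hx with hx | hx <;> rcases hy with hy | hy <;> simp [hx, hy]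

theorem integral_eq_measureReal_of_ae_zero_or_one (hX : Measurable X)
    (h01 : ∀ᵐ ω ∂μ, X ω = 0 ∨ X ω = 1) : ∫ ω, X ω ∂μ = μ.real {ω | X ω = 1} := by
  have hind : X =ᵐ[μ] {ω | X ω = 1}.indicator 1 := by
    filter_upwards [h01] with ω h
    rcases h with h | h <;> simp [h]
  exact (integral_congr_ae hind).trans (integral_indicator_one (hX (measurableSet_singleton 1)))

theorem integral_mul_self_of_ae_zero_or_one (h01 : ∀ᵐ ω ∂μ, X ω = 0 ∨ X ω = 1) :
    ∫ ω, X ω * X ω ∂μ = ∫ ω, X ω ∂μ := by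
  refine integral_congr_ae ?_
  filter_upwards [h01] with ω h
  rcases h with h | h <;> simp [h]

end ZeroOne

section ExclusiveNeighbours

variable {Ω : Type*} [MeasurableSpace Ω] {μ : Measure Ω} {N : ℕ} {n : Fin N → Ω → ℝ} {r : ℝ}

theorem integral_mul_of_exclusive_neighbours (hmeas : ∀ k, AEStronglyMeasurable (n k) μ)
    (hval : ∀ k, ∀ᵐ ω ∂μ, n k ω = 0 ∨ n k ω = 1) (hmean : ∀ k, ∫ ω, n k ω ∂μ = r)
    (hadj : ∀ k l : Fin N, |(k : ℤ) - l| = 1 → ∀ᵐ ω ∂μ, n k ω * n l ω = 0)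
    (hind : ∀ k l : Fin N, 2 ≤ |(k : ℤ) - l| → IndepFun (n k) (n l) μ) (k l : Fin N) :
    ∫ ω, n k ω * n l ω ∂μ = if k = l then r else if |(k : ℤ) - l| = 1 then 0 else r * r := by
  by_cases hkl : k = l
  · rw [if_pos hkl, hkl, integral_mul_self_of_ae_zero_or_one (hval l), hmean]
  by_cases h1 : |(k : ℤ) - l| = 1
  · rw [if_neg hkl, if_pos h1, integral_eq_zero_of_ae (hadj k l h1)]
  have h2 : 2 ≤ |(k : ℤ) - l| := by
    have : (k : ℤ) ≠ l := by exact_mod_cast Fin.val_ne_of_ne hkl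
    rcases abs_cases ((k : ℤ) - l) with ⟨h, _⟩ | ⟨h, _⟩ <;> omega
  rw [if_neg hkl, if_neg h1]
  calc ∫ ω, n k ω * n l ω ∂μ = (∫ ω, n k ω ∂μ) * ∫ ω, n l ω ∂μ :=
        (hind k l h2).integral_mul_eq_mul_integral (hmeas k) (hmeas l)
    _ = r * r := by rw [hmean, hmean]

theorem integral_sum_sq_of_exclusive_neighbours [IsFiniteMeasure μ] (hN : 0 < N)
    (hmeas : ∀ k, AEStronglyMeasurable (n k) μ)
    (hval : ∀ k, ∀ᵐ ω ∂μ, n k ω = 0 ∨ n k ω = 1) (hmean : ∀ k, ∫ ω, n k ω ∂μ = r)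
    (hadj : ∀ k l : Fin N, |(k : ℤ) - l| = 1 → ∀ᵐ ω ∂μ, n k ω * n l ω = 0)
    (hind : ∀ k l : Fin N, 2 ≤ |(k : ℤ) - l| → IndepFun (n k) (n l) μ) :
    ∫ ω, (∑ k, n k ω) ^ 2 ∂μ = N * r + (N - 1) * (N - 2) * r ^ 2 := by
  have hint (k l : Fin N) : Integrable (fun ω => n k ω * n l ω) μ :=
    integrable_of_ae_zero_or_one ((hmeas k).mul (hmeas l)) (ae_mul_zero_or_one (hval k) (hval l))
  simp_rw [sq, sum_mul_sum]
  rw [integral_finsetSum _ fun k _ => integrable_finsetSum _ fun l _ => hint k l]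
  simp_rw [integral_finsetSum _ fun l _ => hint _ l,
    integral_mul_of_exclusive_neighbours hmeas hval hmean hadj hind, sum_ite_diagonal_adjacent hN]
  ring

end ExclusiveNeighbours

theorem stmt6_general {Ω : Type*} [MeasureSpace Ω]
    [IsProbabilityMeasure (volume : Measure Ω)]
    (N : ℕ) (hN : 0 < N) (T lam' τ p : ℝ) (hT : T = 1 / N)
    (n : Fin N → Ω → ℝ) (hmeas : ∀ k, Measurable (n k))
    (hval : ∀ k, ∀ᵐ ω ∂(volume : Measure Ω), n k ω = 0 ∨ n k ω = 1)
    (hprob : ∀ k, volume {ω | n k ω = 1}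
        = ENNReal.ofReal (Real.exp (-lam'*τ) * (1-p) * (1 - Real.exp (-lam'*T) * (1-p))))
    (hadj : ∀ k l : Fin N, |(k : ℤ) - (l : ℤ)| = 1 →
        ∀ᵐ ω ∂(volume : Measure Ω), n k ω * n l ω = 0)
    (hind : ∀ k l : Fin N, 2 ≤ |(k : ℤ) - (l : ℤ)| → IndepFun (n k) (n l)) :
    (∫ ω, (∑ k, n k ω)^2) - (∫ ω, (∑ k, n k ω))^2
      = (∫ ω, (∑ k, n k ω)) + (2*T^2 - 3*T) * (∫ ω, (∑ k, n k ω))^2 := by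
  set r := (ENNReal.ofReal (Real.exp (-lam'*τ) * (1-p) * (1 - Real.exp (-lam'*T) * (1-p)))).toReal
  have hmean (k : Fin N) : ∫ ω, n k ω = r := by
    rw [integral_eq_measureReal_of_ae_zero_or_one (hmeas k) (hval k), measureReal_def, hprob k]
  have hsm (k : Fin N) : AEStronglyMeasurable (n k) := (hmeas k).aestronglyMeasurable
  have hint (k : Fin N) := integrable_of_ae_zero_or_one (hsm k) (hval k)
  have hsum : ∫ ω, (∑ k, n k ω) = N * r := by
    simp [integral_finsetSum _ fun k _ => hint k, hmean]
  rw [hsum, integral_sum_sq_of_exclusive_neighbours hN hsm hval hmean hadj hind, hT]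
  field_simp
  ring

/-- Shot and thermal noise, case `T > τ`: variance of the recorded pulse count. -/
theorem stmt6 {Ω : Type*} [MeasureSpace Ω]
    [IsProbabilityMeasure (volume : Measure Ω)]
    (N : ℕ) (hN : 0 < N) (T lam' τ p : ℝ) (hT : T = 1 / N)
    (hlam : 0 < lam') (hτ : 0 < τ) (hp0 : 0 < p)
    (n : Fin N → Ω → ℝ) (hmeas : ∀ k, Measurable (n k))
    (hval : ∀ k, ∀ᵐ ω ∂(volume : Measure Ω), n k ω = 0 ∨ n k ω = 1)
    (hprob : ∀ k, volume {ω | n k ω = 1}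
        = ENNReal.ofReal (Real.exp (-lam'*τ) * (1-p) * (1 - Real.exp (-lam'*T) * (1-p))))
    (hadj : ∀ k l : Fin N, |(k : ℤ) - (l : ℤ)| = 1 →
        ∀ᵐ ω ∂(volume : Measure Ω), n k ω * n l ω = 0)
    (hind : ∀ k l : Fin N, 2 ≤ |(k : ℤ) - (l : ℤ)| → IndepFun (n k) (n l)) :
    (∫ ω, (∑ k, n k ω)^2) - (∫ ω, (∑ k, n k ω))^2
      = (∫ ω, (∑ k, n k ω)) + (2*T^2 - 3*T) * (∫ ω, (∑ k, n k ω))^2 :=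
  stmt6_general N hN T lam' τ p hT n hmeas hval hprob hadj hind
end

section
/- Let N > 0 and 0 < P₀ < P₁ < 1. Then D(P₁ᴮ||P₀ᴮ) - D(P₀ᴮ||P₁ᴮ) = N[(P₀+P₁)log(P₁/P₀) + (2-P₁-P₀)log((1-P₁)/(1-P₀))] > N[P₁ log(P₁/P₀) - 2P₁/(1-P₁)]. In particular, if log(P₁/P₀) > 2/(1-P₁) then D(P₁ᴮ||P₀ᴮ) > D(P₀ᴮ||P₁ᴮ), where D denotes the KL divergence between B(N,P₁) and B(N,P₀). -/
open Finset

/-- The binomial probability mass function. -/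
noncomputable def binomPMF (n : ℕ) (p : ℝ) (k : ℕ) : ℝ :=
  (n.choose k : ℝ) * p^k * (1-p)^(n-k)

/-- The Kullback–Leibler divergence between two binomial distributions `B(n,p)`, `B(n,q)`. -/
noncomputable def klBinom (n : ℕ) (p q : ℝ) : ℝ :=
  ∑ k ∈ Finset.range (n+1), binomPMF n p k * Real.log (binomPMF n p k / binomPMF n q k)

/-! The log-likelihood ratio of `B(n,p)` against `B(n,q)` is affine in `k`, so taking the mean
`np` gives the closed form `n (p log(p/q) + (1-p) log((1-p)/(1-q)))` for both divergences, whence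
the identity. For the bound, `log x < x - 1` gives `log((1-P₀)/(1-P₁)) < (P₁-P₀)/(1-P₁)`, which
controls the negative second term since its coefficient `2 - P₁ - P₀` is less than `2`. -/

theorem sum_range_mul_choose_mul_pow {R : Type*} [CommSemiring R] (x y : R) (n : ℕ) :
    ∑ k ∈ range (n + 1), (k * n.choose k : R) * x ^ k * y ^ (n - k)
      = n * x * (x + y) ^ (n - 1) := by
  cases n with
  | zero => simp
  | succ m =>
    rw [sum_range_succ', Nat.add_sub_cancel, add_pow, mul_sum]
    simp only [Nat.cast_zero, zero_mul, add_zero, Nat.add_sub_add_right]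
    refine sum_congr rfl fun i _ => ?_
    have hchoose :
        ((i + 1 : ℕ) * (m + 1).choose (i + 1) : R) = (m + 1 : ℕ) * m.choose i := by
      rw [mul_comm, ← Nat.cast_mul, ← Nat.cast_mul, ← Nat.add_one_mul_choose_eq]
    rw [hchoose]
    push_cast
    ring

theorem sum_binomPMF (n : ℕ) (p : ℝ) : ∑ k ∈ range (n + 1), binomPMF n p k = 1 := by
  calc ∑ k ∈ range (n + 1), binomPMF n p k
      = ∑ k ∈ range (n + 1), p ^ k * (1 - p) ^ (n - k) * n.choose k :=
        sum_congr rfl fun k _ => by rw [binomPMF]; ring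
    _ = 1 := by rw [← add_pow, add_sub_cancel, one_pow]

theorem sum_mul_binomPMF (n : ℕ) (p : ℝ) :
    ∑ k ∈ range (n + 1), (k : ℝ) * binomPMF n p k = n * p := by
  simpa [binomPMF, mul_assoc] using sum_range_mul_choose_mul_pow p (1 - p) n

theorem log_binomPMF_div_binomPMF {n k : ℕ} (hk : k ≤ n) {p q : ℝ} (hp : p ≠ 0) (hp₁ : p ≠ 1)
    (hq : q ≠ 0) (hq₁ : q ≠ 1) :
    Real.log (binomPMF n p k / binomPMF n q k)
      = k * Real.log (p / q) + (n - k) * Real.log ((1 - p) / (1 - q)) := by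
  have hchoose : (n.choose k : ℝ) ≠ 0 := by exact_mod_cast (Nat.choose_pos hk).ne'
  have hp' : 1 - p ≠ 0 := sub_ne_zero.mpr hp₁.symm
  have hq' : 1 - q ≠ 0 := sub_ne_zero.mpr hq₁.symm
  have hratio :
      binomPMF n p k / binomPMF n q k = (p / q) ^ k * ((1 - p) / (1 - q)) ^ (n - k) := by
    rw [binomPMF, binomPMF, div_pow, div_pow]
    field_simp
  rw [hratio, Real.log_mul (by positivity) (by positivity), Real.log_pow, Real.log_pow,
    Nat.cast_sub hk]

theorem klBinom_eq {p q : ℝ} (n : ℕ) (hp : p ≠ 0) (hp₁ : p ≠ 1) (hq : q ≠ 0) (hq₁ : q ≠ 1) :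
    klBinom n p q = n * (p * Real.log (p / q) + (1 - p) * Real.log ((1 - p) / (1 - q))) := by
  set L := Real.log (p / q)
  set M := Real.log ((1 - p) / (1 - q))
  calc klBinom n p q
      = ∑ k ∈ range (n + 1),
          (L * (k * binomPMF n p k) + M * (n * binomPMF n p k - k * binomPMF n p k)) := by
        refine sum_congr rfl fun k hk => ?_
        rw [log_binomPMF_div_binomPMF (mem_range_succ_iff.mp hk) hp hp₁ hq hq₁]
        ring
    _ = L * (n * p) + M * (n * 1 - n * p) := by
        rw [sum_add_distrib, ← mul_sum, ← mul_sum, sum_sub_distrib, ← mul_sum, sum_mul_binomPMF,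
          sum_binomPMF]
    _ = _ := by ring

theorem klBinom_sub_klBinom {p q : ℝ} (n : ℕ) (hp : p ≠ 0) (hp₁ : p ≠ 1) (hq : q ≠ 0)
    (hq₁ : q ≠ 1) :
    klBinom n p q - klBinom n q p
      = n * ((q + p) * Real.log (p / q) + (2 - p - q) * Real.log ((1 - p) / (1 - q))) := by
  rw [klBinom_eq n hp hp₁ hq hq₁, klBinom_eq n hq hq₁ hp hp₁, ← inv_div p, ← inv_div (1 - p),
    Real.log_inv, Real.log_inv]
  ring

theorem log_one_sub_div_one_sub_lt {p q : ℝ} (hqp : q < p) (hp : p < 1) :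
    Real.log ((1 - q) / (1 - p)) < (p - q) / (1 - p) := by
  have hp' : 0 < 1 - p := by linarith
  have hq' : 0 < 1 - q := by linarith
  calc Real.log ((1 - q) / (1 - p)) < (1 - q) / (1 - p) - 1 :=
        Real.log_lt_sub_one_of_pos (by positivity)
          (by rw [Ne, div_eq_one_iff_eq hp'.ne']; linarith)
    _ = (p - q) / (1 - p) := by field_simp; ring

theorem mul_log_div_sub_lt_of_lt {p q : ℝ} (hq : 0 < q) (hqp : q < p) (hp : p < 1) :
    p * Real.log (p / q) - 2 * p / (1 - p)
      < (q + p) * Real.log (p / q) + (2 - p - q) * Real.log ((1 - p) / (1 - q)) := by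
  have hp' : 0 < 1 - p := by linarith
  have hL : 0 < Real.log (p / q) := Real.log_pos ((one_lt_div hq).mpr hqp)
  set D := Real.log ((1 - q) / (1 - p))
  have hM : Real.log ((1 - p) / (1 - q)) = -D := by rw [← Real.log_inv, inv_div]
  have hD : 0 < D := Real.log_pos ((one_lt_div hp').mpr (by linarith))
  have hDp : D < p / (1 - p) :=
    (log_one_sub_div_one_sub_lt hqp hp).trans (div_lt_div_of_pos_right (by linarith) hp')
  rw [hM, mul_div_assoc]
  linarith [mul_pos hq hL, mul_pos (add_pos hq (hq.trans hqp)) hD]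

/-- Comparison of the two KL divergences between equal-length binomials. -/
theorem stmt10 (N : ℕ) (hN : 0 < N) (P₀ P₁ : ℝ) (h0 : 0 < P₀) (h01 : P₀ < P₁)
    (h1 : P₁ < 1) :
    klBinom N P₁ P₀ - klBinom N P₀ P₁
        = N * ((P₀+P₁) * Real.log (P₁/P₀) + (2-P₁-P₀) * Real.log ((1-P₁)/(1-P₀))) ∧
    klBinom N P₁ P₀ - klBinom N P₀ P₁
        > N * (P₁ * Real.log (P₁/P₀) - 2*P₁/(1-P₁)) ∧
    (Real.log (P₁/P₀) > 2/(1-P₁) → klBinom N P₁ P₀ > klBinom N P₀ P₁) := by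
  have hP₁ : 0 < P₁ := h0.trans h01
  have hgap := klBinom_sub_klBinom N hP₁.ne' h1.ne h0.ne' (h01.trans h1).ne
  have hbound :
      N * (P₁ * Real.log (P₁/P₀) - 2*P₁/(1-P₁)) < klBinom N P₁ P₀ - klBinom N P₀ P₁ := by
    rw [hgap]
    exact mul_lt_mul_of_pos_left (mul_log_div_sub_lt_of_lt h0 h01 h1) (by exact_mod_cast hN)
  refine ⟨hgap, hbound, fun hlog => ?_⟩
  have hrate : 0 ≤ P₁ * Real.log (P₁/P₀) - 2*P₁/(1-P₁) := by
    rw [show P₁ * Real.log (P₁/P₀) - 2*P₁/(1-P₁) = P₁ * (Real.log (P₁/P₀) - 2/(1-P₁)) by ring]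
    exact mul_nonneg hP₁.le (by linarith)
  linarith [mul_nonneg (Nat.cast_nonneg N : (0:ℝ) ≤ N) hrate]
end

section
/- Let λ₁' > 0, T > 0, τ' = τ + T/2, and suppose N̂₁ ≤ log(1 + 2λ₁'τ')/(2τ'). Then p₁ := 2τ'N̂₁ satisfies p₁(1 - λ₁'τ') + (1-p₁)log(1-p₁) ≤ 0, provided 0 ≤ p₁ < 1/2; equivalently e^{p₁} - 1 - 2λ₁'τ' ≤ 0 implies the derivative of N₁ log(1/(1-P₁)) (with N₁ = 1/(2τ'), P₁ = 2τ'N̂₁ and N̂₁ = C e^{-λ₁'τ} for a τ-independent constant C > 0) with respect to τ is nonpositive. -/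
/-!
Since `exp p₁ ≤ 1 + 2λ₁'τ'`, the first claim reduces to
`(1 - x) log (1 - x) ≤ -x + x (eˣ - 1) / 2` on `[0, 1/2)`, which follows from the Taylor bounds
`log (1 - x) ≤ -(x + x²/2 + x³/3 + x⁴/4)` and `eˣ ≥ 1 + x + x²/2 + x³/6`.
With `u = 2(t + T/2)` and `P = u C e^{-λ₁' t}`, the derivative at `τ` is
`2 (p₁ (1 - λ₁'τ') + (1 - p₁) log (1 - p₁)) / (u² (1 - p₁))`, so its sign is that of the first claim.
-/

open Real Finset

theorem Real.log_one_sub_le_neg_sum_range {x : ℝ} (hx0 : 0 ≤ x) (hx1 : x < 1) (n : ℕ) :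
    log (1 - x) ≤ -∑ i ∈ range n, x ^ (i + 1) / (i + 1) := by
  have hsum := Real.hasSum_pow_div_log_of_abs_lt_one (by rwa [abs_of_nonneg hx0])
  have := sum_le_hasSum (range n) (fun i _ => by positivity) hsum
  linarith

theorem Real.one_sub_mul_log_one_sub_le {x : ℝ} (hx0 : 0 ≤ x) (hx : x < 1 / 2) :
    (1 - x) * log (1 - x) ≤ -x + x * (exp x - 1) / 2 := by
  have hlog : log (1 - x) ≤ -(x + x ^ 2 / 2 + x ^ 3 / 3 + x ^ 4 / 4) := by
    have := Real.log_one_sub_le_neg_sum_range hx0 (by linarith) 4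
    norm_num [sum_range_succ] at this
    linarith
  have hexp : 1 + x + x ^ 2 / 2 + x ^ 3 / 6 ≤ exp x := by
    have := Real.sum_le_exp_of_nonneg hx0 4
    norm_num [sum_range_succ, Nat.factorial] at this
    linarith
  -- After the two Taylor bounds, what is left is `x ^ 5 / 4 ≤ x ^ 3 / 12`, i.e. `x ^ 2 ≤ 1 / 3`.
  have hsq : x ^ 2 ≤ 1 / 4 := by nlinarith
  have hx5 : x ^ 5 ≤ x ^ 3 / 4 := by nlinarith [mul_le_mul_of_nonneg_left hsq (pow_nonneg hx0 3)]
  nlinarith [mul_le_mul_of_nonneg_left hlog (by linarith : (0 : ℝ) ≤ 1 - x),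
    mul_le_mul_of_nonneg_left hexp hx0]

theorem mul_one_sub_add_one_sub_mul_log_nonpos {p a : ℝ} (hp0 : 0 ≤ p) (hp : p < 1 / 2)
    (ha : exp p ≤ 1 + 2 * a) : p * (1 - a) + (1 - p) * log (1 - p) ≤ 0 := by
  have := Real.one_sub_mul_log_one_sub_le hp0 hp
  nlinarith [mul_le_mul_of_nonneg_left ha hp0]

theorem hasDerivAt_one_div_mul_log_one_div_one_sub {u P : ℝ → ℝ} {u' P' x : ℝ}
    (hu : HasDerivAt u u' x) (hP : HasDerivAt P P' x) (hu0 : u x ≠ 0) (hP1 : 1 - P x ≠ 0) :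
    HasDerivAt (fun t => 1 / u t * log (1 / (1 - P t)))
      ((P' * u x + u' * ((1 - P x) * log (1 - P x))) / (u x ^ 2 * (1 - P x))) x := by
  have hlog : HasDerivAt (fun t => -log (1 - P t)) (-(-P' / (1 - P x))) x :=
    ((hP.const_sub 1).log hP1).neg
  simp only [one_div, ← Real.log_inv] at hlog ⊢
  refine ((hu.inv hu0).mul hlog).congr_deriv ?_
  rw [Real.log_inv, Pi.inv_apply]
  field_simp
  ring

/-- Key step of Lemma 3: if `N̂₁ ≤ log(1+2λ₁'τ')/(2τ')`, then
`p₁(1-λ₁'τ') + (1-p₁)log(1-p₁) ≤ 0` for `p₁ = 2τ'N̂₁ < 1/2`, and hence the derivative of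
`N₁ log(1/(1-P₁))` with respect to `τ` is nonpositive. -/
theorem stmt16 (lam1 T τ τ' Nh1 p1 : ℝ) (hlam : 0 < lam1) (hT : 0 < T) (hτ : 0 < τ)
    (hτ' : τ' = τ + T/2) (hNh : 0 ≤ Nh1)
    (hle : Nh1 ≤ Real.log (1 + 2*lam1*τ') / (2*τ'))
    (hp1 : p1 = 2*τ'*Nh1) (hp1half : p1 < 1/2) :
    p1 * (1 - lam1*τ') + (1 - p1) * Real.log (1 - p1) ≤ 0 ∧
    (∀ C : ℝ, 0 < C → Nh1 = C * Real.exp (-lam1*τ) →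
      deriv (fun t => (1/(2*(t + T/2)))
          * Real.log (1/(1 - 2*(t + T/2) * (C * Real.exp (-lam1*t))))) τ ≤ 0) := by
  have hτ'pos : 0 < τ' := by rw [hτ']; positivity
  have hp0 : 0 ≤ p1 := by rw [hp1]; positivity
  have hexp : exp p1 ≤ 1 + 2 * (lam1 * τ') := by
    rw [← mul_assoc, ← Real.exp_log (by positivity : (0 : ℝ) < 1 + 2 * lam1 * τ'),
      Real.exp_le_exp, hp1]
    rwa [le_div_iff₀ (by positivity), mul_comm] at hle
  have key := mul_one_sub_add_one_sub_mul_log_nonpos hp0 hp1half hexp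
  refine ⟨key, fun C _ hNC => ?_⟩
  have hu : HasDerivAt (fun t => 2 * (t + T / 2)) 2 τ := by
    simpa using ((hasDerivAt_id τ).add_const (T / 2)).const_mul 2
  have hN : HasDerivAt (fun t => C * exp (-lam1 * t)) (C * (exp (-lam1 * τ) * -lam1)) τ := by
    simpa using (((hasDerivAt_id τ).const_mul (-lam1)).exp).const_mul C
  have hPτ : 2 * (τ + T / 2) * (C * exp (-lam1 * τ)) = p1 := by rw [hp1, hτ', hNC]
  have hP : HasDerivAt (fun t => 2 * (t + T / 2) * (C * exp (-lam1 * t)))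
      (2 * (C * exp (-lam1 * τ)) + 2 * (τ + T / 2) * (C * (exp (-lam1 * τ) * -lam1))) τ :=
    hu.mul hN
  have hd := hasDerivAt_one_div_mul_log_one_div_one_sub hu hP (by positivity)
    (by rw [hPτ]; linarith)
  rw [hd.deriv, hPτ]
  apply div_nonpos_of_nonpos_of_nonneg
  · have : (2 * (C * exp (-lam1 * τ)) + 2 * (τ + T / 2) * (C * (exp (-lam1 * τ) * -lam1)))
          * (2 * (τ + T / 2)) + 2 * ((1 - p1) * log (1 - p1))
        = 2 * (p1 * (1 - lam1 * τ') + (1 - p1) * log (1 - p1)) := by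
      rw [hp1, hτ', hNC]; ring
    linarith
  · have : 0 ≤ 1 - p1 := by linarith
    positivity
end

section
/- For all sufficiently small z > 0 (in particular for 0 < z small enough that 1 - 3z + 14z² + 3z³ + 10z⁴ > 0), the function r(z) = 3e^{-z-z³}(1 - e^{-z-z³}) - log(1+3z) satisfies r'(z) ≤ 0 and hence r(z) ≤ r(0) = 0, i.e., 3e^{-z-z³}(1 - e^{-z-z³}) ≤ log(1+3z). -/
/-!
Write `w = z + z³` and `P = (1 + 3z²)(1 + 3z)`. Differentiating gives
`expLogGap'(z) = 3 e^{-2w} (2P - P e^w - e^{2w}) / (1 + 3z)`, and the numerator is decreasing in `e^w`,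
so `e^w ≥ 1 + w` bounds it by `P(1 - w) - (1 + w)² = -z²(1 - 3z + 14z² + 3z³ + 10z⁴)`, which is
nonpositive for `z ≥ 0`. Hence `expLogGap` is antitone on `[0, ∞)` and nonpositive there.
-/

open Real Set

noncomputable def expLogGap (z : ℝ) : ℝ :=
  3 * exp (-z - z ^ 3) * (1 - exp (-z - z ^ 3)) - log (1 + 3 * z)

lemma quartic_pos_of_nonneg {z : ℝ} (hz : 0 ≤ z) : 0 < 1 - 3 * z + 14 * z ^ 2 + 3 * z ^ 3 + 10 * z ^ 4 := by
  nlinarith [sq_nonneg (28 * z - 3), pow_nonneg hz 3, pow_nonneg hz 4]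

noncomputable def expLogGapNumerator (z : ℝ) : ℝ :=
  2 * (1 + 3 * z ^ 2) * (1 + 3 * z) - exp (z + z ^ 3) * (1 + 3 * z ^ 2) * (1 + 3 * z)
    - exp (z + z ^ 3) ^ 2

lemma expLogGapNumerator_le {z : ℝ} (hz : 0 ≤ z) :
    expLogGapNumerator z ≤ -z ^ 2 * (1 - 3 * z + 14 * z ^ 2 + 3 * z ^ 3 + 10 * z ^ 4) := by
  rw [expLogGapNumerator]
  set E := exp (z + z ^ 3)
  have hE : 1 + (z + z ^ 3) ≤ E := by linarith [add_one_le_exp (z + z ^ 3)]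
  have hfactor : 0 ≤ (E - (1 + (z + z ^ 3))) * ((1 + 3 * z ^ 2) * (1 + 3 * z) + E + 1 + z + z ^ 3) := by
    apply mul_nonneg (sub_nonneg.mpr hE)
    have := exp_pos (z + z ^ 3)
    positivity
  -- the two sides differ by `(E - (1 + w)) (P + E + 1 + w)`
  linear_combination hfactor

lemma expLogGapNumerator_nonpos {z : ℝ} (hz : 0 ≤ z) : expLogGapNumerator z ≤ 0 :=
  (expLogGapNumerator_le hz).trans <|
    mul_nonpos_of_nonpos_of_nonneg (neg_nonpos.mpr (sq_nonneg z)) (quartic_pos_of_nonneg hz).le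

lemma hasDerivAt_expLogGap {z : ℝ} (hz : -(1 / 3) < z) :
    HasDerivAt expLogGap
      (3 * (1 + 3 * z ^ 2) * exp (-z - z ^ 3) * (2 * exp (-z - z ^ 3) - 1) - 3 / (1 + 3 * z)) z := by
  have hw : HasDerivAt (fun z : ℝ => -z - z ^ 3) (-(1 + 3 * z ^ 2)) z := by
    refine ((hasDerivAt_neg z).sub (hasDerivAt_pow 3 z)).congr_deriv ?_
    push_cast
    ring
  have hlin : HasDerivAt (fun z : ℝ => 1 + 3 * z) 3 z := by
    simpa using ((hasDerivAt_id z).const_mul 3).const_add 1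
  have hlog := hlin.log (by linarith)
  refine (((hw.exp.const_mul 3).mul ((hasDerivAt_const z 1).sub hw.exp)).sub hlog).congr_deriv ?_
  simp only [Pi.sub_apply]
  ring

lemma expLogGap_deriv_nonpos {z : ℝ} (hz : 0 ≤ z) :
    3 * (1 + 3 * z ^ 2) * exp (-z - z ^ 3) * (2 * exp (-z - z ^ 3) - 1) - 3 / (1 + 3 * z) ≤ 0 := by
  set A := exp (-z - z ^ 3)
  set E := exp (z + z ^ 3)
  have hAE : A * E = 1 := by rw [← exp_add]; ring_nf; exact exp_zero
  have h3z : 0 < 1 + 3 * z := by linarith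
  have hscale : 0 < (1 + 3 * z) * E ^ 2 := by positivity
  have hcleared :
      (3 * (1 + 3 * z ^ 2) * A * (2 * A - 1) - 3 / (1 + 3 * z)) * ((1 + 3 * z) * E ^ 2)
        = 3 * expLogGapNumerator z := by
    rw [expLogGapNumerator]
    have hdiv : 3 / (1 + 3 * z) * ((1 + 3 * z) * E ^ 2) = 3 * E ^ 2 := by field_simp
    linear_combination (3 * (1 + 3 * z ^ 2) * (1 + 3 * z) * (2 * A * E + 2 - E)) * hAE - hdiv
  refine le_of_mul_le_mul_right ?_ hscale
  rw [hcleared, zero_mul]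
  linarith [expLogGapNumerator_nonpos hz]

lemma antitoneOn_expLogGap : AntitoneOn expLogGap (Ici 0) := by
  have hderiv {x : ℝ} (hx : 0 ≤ x) := hasDerivAt_expLogGap (z := x) (by linarith)
  refine antitoneOn_of_deriv_nonpos (convex_Ici 0)
    (fun x hx => (hderiv hx).continuousAt.continuousWithinAt) ?_ ?_
  · intro x hx
    rw [interior_Ici] at hx
    exact (hderiv hx.le).differentiableAt.differentiableWithinAt
  · intro x hx
    rw [interior_Ici] at hx
    rw [(hderiv hx.le).deriv]
    exact expLogGap_deriv_nonpos hx.le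

lemma expLogGap_zero : expLogGap 0 = 0 := by simp [expLogGap]

/-- Appendix G inequality: for sufficiently small `z > 0`, the function
`r(z) = 3e^{-z-z³}(1-e^{-z-z³}) - log(1+3z)` has nonpositive derivative and is nonpositive. -/
theorem stmt17 :
    ∃ ε > (0:ℝ), ∀ z : ℝ, 0 < z → z < ε →
      (0 < 1 - 3*z + 14*z^2 + 3*z^3 + 10*z^4) ∧
      deriv (fun z => 3 * Real.exp (-z - z^3) * (1 - Real.exp (-z - z^3))
          - Real.log (1 + 3*z)) z ≤ 0 ∧
      3 * Real.exp (-z - z^3) * (1 - Real.exp (-z - z^3)) ≤ Real.log (1 + 3*z) := by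
  refine ⟨1, one_pos, fun z hz _ => ⟨quartic_pos_of_nonneg hz.le, ?_, ?_⟩⟩
  · change deriv expLogGap z ≤ 0
    rw [(hasDerivAt_expLogGap (by linarith)).deriv]
    exact expLogGap_deriv_nonpos hz.le
  · have := antitoneOn_expLogGap (mem_Ici.mpr le_rfl) (mem_Ici.mpr hz.le) hz.le
    rw [expLogGap_zero, expLogGap] at this
    linarith
end
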